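/- arXiv:2510.09485 — 6 statements merged into one kernel-verified Lean document; each statement's English description precedes it below -/
import Mathlib

section
/- Let 0 ≤ c₁ < 1 < c₂ with k := (c₂−c₁)/(1−c₁) ∈ ℕ, let ε ≥ 0 and δ ∈ [0,1], and let g*_{ε,δ} denote the convex conjugate over [0,1] of g_{ε,δ}(θ) := max{0, 1−δ−e^ε·θ, e^{−ε}(1−δ−θ)}. Then inf_{β ≥ 0} [e^β + k(1 + g*_{ε,δ}(−e^β)) − 1]/[(1−c₁)e^β + c₂ − 1] = (e^ε + k·δ − 1)/((1−c₁)e^ε + c₂ − 1). -/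
open Set

noncomputable section

def gEpsDelta (ε δ : ℝ) (θ : ℝ) : ℝ :=
  max 0 (max (1 - δ - Real.exp ε * θ) (Real.exp (-ε) * (1 - δ - θ)))

def gConj01 (g : ℝ → ℝ) (y : ℝ) : ℝ :=
  sSup ((fun θ => θ * y - g θ) '' Set.Icc 0 1)

lemma conjA (ε δ β : ℝ) (hβ : 0 ≤ β) (hβε : β ≤ ε) (hδ0 : 0 ≤ δ) (hδ1 : δ ≤ 1) :
    gConj01 (gEpsDelta ε δ) (-(Real.exp β)) =
      -((1 - δ) * (Real.exp β + 1)) / (Real.exp ε + 1) := by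
  have hε : 0 ≤ ε := hβ.trans hβε
  set E := Real.exp ε with hEdef
  set B := Real.exp β with hBdef
  have hE1 : 1 ≤ E := Real.one_le_exp hε
  have hB1 : 1 ≤ B := Real.one_le_exp hβ
  have hBE : B ≤ E := Real.exp_le_exp.2 hβε
  have hinv : Real.exp (-ε) * E = 1 := by
    rw [hEdef, ← Real.exp_add]; simp
  have hE1' : (0:ℝ) < E + 1 := by linarith
  have hEpos : (0:ℝ) < E := by linarith
  apply IsGreatest.csSup_eq
  constructor
  · refine ⟨(1 - δ)/(E + 1), ⟨⟨div_nonneg (by linarith) (by linarith), ?_⟩, ?_⟩⟩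
    · rw [div_le_one hE1']; linarith
    · show (1 - δ)/(E + 1) * (-B) - gEpsDelta ε δ ((1 - δ)/(E + 1))
        = -((1 - δ) * (B + 1)) / (E + 1)
      have ha : 1 - δ - E * ((1 - δ)/(E + 1)) = (1 - δ)/(E + 1) := by
        field_simp; ring
      have hb : Real.exp (-ε) * (1 - δ - (1 - δ)/(E + 1)) = (1 - δ)/(E + 1) := by
        have h : 1 - δ - (1 - δ)/(E + 1) = E * ((1 - δ)/(E + 1)) := by field_simp; ring
        rw [h, ← mul_assoc, hinv, one_mul]
      have hg : gEpsDelta ε δ ((1 - δ)/(E + 1)) = (1 - δ)/(E + 1) := by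
        rw [gEpsDelta, ha, hb, max_self,
          max_eq_right (div_nonneg (by linarith) (by linarith))]
      rw [hg]; field_simp; ring
  · rintro x ⟨θ, ⟨hθ0, hθ1⟩, rfl⟩
    have hg1 : 1 - δ - E * θ ≤ gEpsDelta ε δ θ :=
      (le_max_left _ _).trans (le_max_right _ _)
    have hg2 : Real.exp (-ε) * (1 - δ - θ) ≤ gEpsDelta ε δ θ :=
      (le_max_right _ _).trans (le_max_right _ _)
    show θ * (-B) - gEpsDelta ε δ θ ≤ -((1 - δ) * (B + 1)) / (E + 1)
    rw [le_div_iff₀ hE1']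
    rcases le_total (θ * (E + 1)) (1 - δ) with h | h
    · nlinarith [mul_le_mul_of_nonneg_right h (sub_nonneg.2 hBE), hg1]
    · have hg2' : 1 - δ - θ ≤ E * gEpsDelta ε δ θ := by
        nlinarith [hg2, hEpos]
      nlinarith [mul_le_mul_of_nonneg_right h (by nlinarith : (0:ℝ) ≤ B * E - 1), hg2', hEpos]

lemma conjB (ε δ β : ℝ) (hε : 0 ≤ ε) (hεβ : ε ≤ β) (hδ0 : 0 ≤ δ) (hδ1 : δ ≤ 1) :
    gConj01 (gEpsDelta ε δ) (-(Real.exp β)) = δ - 1 := by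
  set E := Real.exp ε
  set B := Real.exp β
  have hE1 : 1 ≤ E := Real.one_le_exp hε
  have hEB : E ≤ B := Real.exp_le_exp.2 hεβ
  have hexpneg : Real.exp (-ε) ≤ 1 := Real.exp_le_one_iff.2 (by linarith)
  have hexppos : 0 < Real.exp (-ε) := Real.exp_pos _
  apply IsGreatest.csSup_eq
  constructor
  · refine ⟨0, ⟨⟨le_rfl, zero_le_one⟩, ?_⟩⟩
    show 0 * (-B) - gEpsDelta ε δ 0 = δ - 1
    have hg : gEpsDelta ε δ 0 = 1 - δ := by
      rw [gEpsDelta, show (1 - δ - Real.exp ε * 0) = 1 - δ by ring,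
        show Real.exp (-ε) * (1 - δ - 0) = Real.exp (-ε) * (1 - δ) by ring,
        max_eq_left (by nlinarith : Real.exp (-ε) * (1 - δ) ≤ 1 - δ),
        max_eq_right (by linarith : (0:ℝ) ≤ 1 - δ)]
    rw [hg]; ring
  · rintro x ⟨θ, ⟨hθ0, hθ1⟩, rfl⟩
    have hg1 : 1 - δ - E * θ ≤ gEpsDelta ε δ θ :=
      (le_max_left _ _).trans (le_max_right _ _)
    show θ * (-B) - gEpsDelta ε δ θ ≤ δ - 1
    nlinarith [mul_le_mul_of_nonneg_left hEB hθ0]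

/-- The infimum defining the optimal mixture weight for `g_{ε,δ}`-FLDP has the
closed form `(e^ε + k·δ − 1)/((1−c₁)e^ε + c₂ − 1)`. -/
theorem stmt_12 (c₁ c₂ : ℝ) (hc₁0 : 0 ≤ c₁) (hc₁ : c₁ < 1) (hc₂ : 1 < c₂)
    (k : ℕ) (hk : (c₂ - c₁) / (1 - c₁) = (k : ℝ))
    (ε δ : ℝ) (hε : 0 ≤ ε) (hδ : δ ∈ Set.Icc (0:ℝ) 1) :
    sInf {v : ℝ | ∃ β : ℝ, 0 ≤ β ∧
      v = (Real.exp β + (k : ℝ) * (1 + gConj01 (gEpsDelta ε δ) (-(Real.exp β))) - 1) /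
          ((1 - c₁) * Real.exp β + c₂ - 1)} =
      (Real.exp ε + (k : ℝ) * δ - 1) / ((1 - c₁) * Real.exp ε + c₂ - 1) := by
  obtain ⟨hδ0, hδ1⟩ := hδ
  have hkc : c₂ = c₁ + (k:ℝ) * (1 - c₁) := by
    rw [div_eq_iff (by linarith : (1:ℝ) - c₁ ≠ 0)] at hk; linarith
  have hk2 : (2:ℝ) ≤ (k:ℝ) := by
    have h1 : (1:ℝ) < (k:ℝ) := by
      rw [← hk, lt_div_iff₀ (by linarith)]; linarith
    have h2 : 1 < k := by exact_mod_cast h1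
    exact_mod_cast h2
  set E := Real.exp ε with hEdef
  have hE1 : 1 ≤ E := Real.one_le_exp hε
  have hDε : (0:ℝ) < (1 - c₁) * E + c₂ - 1 := by nlinarith
  set T := (E + (k : ℝ) * δ - 1) / ((1 - c₁) * E + c₂ - 1) with hTdef
  have hTmem : T ∈ {v : ℝ | ∃ β : ℝ, 0 ≤ β ∧
      v = (Real.exp β + (k : ℝ) * (1 + gConj01 (gEpsDelta ε δ) (-(Real.exp β))) - 1) /
          ((1 - c₁) * Real.exp β + c₂ - 1)} := by
    refine ⟨ε, hε, ?_⟩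
    rw [conjB ε δ ε hε le_rfl hδ0 hδ1, hTdef]
    congr 1; ring
  have hlb : ∀ v ∈ {v : ℝ | ∃ β : ℝ, 0 ≤ β ∧
      v = (Real.exp β + (k : ℝ) * (1 + gConj01 (gEpsDelta ε δ) (-(Real.exp β))) - 1) /
          ((1 - c₁) * Real.exp β + c₂ - 1)}, T ≤ v := by
    rintro v ⟨β, hβ, rfl⟩
    set B := Real.exp β with hBdef
    have hB1 : 1 ≤ B := Real.one_le_exp hβ
    have hDβ : (0:ℝ) < (1 - c₁) * B + c₂ - 1 := by nlinarith
    rcases le_total β ε with hcase | hcase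
    · have hBE : B ≤ E := Real.exp_le_exp.2 hcase
      rw [conjA ε δ β hβ hcase hδ0 hδ1]
      have hE1' : (0:ℝ) < E + 1 := by linarith
      have hN : ((k:ℝ) * (1 + -((1 - δ) * (B + 1)) / (E + 1))) * (E + 1)
          = (k:ℝ) * (E + 1) - (k:ℝ) * (1 - δ) * (B + 1) := by
        field_simp; ring
      rw [hTdef, div_le_div_iff₀ hDε hDβ, ← mul_le_mul_iff_of_pos_right hE1']
      have key : (E + (k:ℝ) * δ - 1) * ((1 - c₁) * B + c₂ - 1) * (E + 1)
          ≤ ((B - 1) * (E + 1) + ((k:ℝ) * (E + 1) - (k:ℝ) * (1 - δ) * (B + 1)))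
              * ((1 - c₁) * E + c₂ - 1) := by
        have hid : ((B - 1) * (E + 1) + ((k:ℝ) * (E + 1) - (k:ℝ) * (1 - δ) * (B + 1)))
              * ((1 - c₁) * E + c₂ - 1)
            - (E + (k:ℝ) * δ - 1) * ((1 - c₁) * B + c₂ - 1) * (E + 1)
            = (1 - c₁) * (k:ℝ) * (1 - δ) * (((k:ℝ) - 2) * (E - B)) := by
          rw [hkc]; ring
        nlinarith [mul_nonneg (mul_nonneg (mul_nonneg
          (by linarith : (0:ℝ) ≤ 1 - c₁) (by linarith : (0:ℝ) ≤ (k:ℝ)))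
          (by linarith : (0:ℝ) ≤ 1 - δ))
          (mul_nonneg (by linarith : (0:ℝ) ≤ (k:ℝ) - 2) (by linarith : (0:ℝ) ≤ E - B))]
      calc (E + (k:ℝ) * δ - 1) * ((1 - c₁) * B + c₂ - 1) * (E + 1)
          ≤ ((B - 1) * (E + 1) + ((k:ℝ) * (E + 1) - (k:ℝ) * (1 - δ) * (B + 1)))
              * ((1 - c₁) * E + c₂ - 1) := key
        _ = (B + (k:ℝ) * (1 + -((1 - δ) * (B + 1)) / (E + 1)) - 1)
              * ((1 - c₁) * E + c₂ - 1) * (E + 1) := by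
            rw [show (B + (k:ℝ) * (1 + -((1 - δ) * (B + 1)) / (E + 1)) - 1)
              * ((1 - c₁) * E + c₂ - 1) * (E + 1)
              = ((B - 1) * (E + 1) + ((k:ℝ) * (1 + -((1 - δ) * (B + 1)) / (E + 1))) * (E + 1))
                * ((1 - c₁) * E + c₂ - 1) by ring, hN]
    · have hEB : E ≤ B := Real.exp_le_exp.2 hcase
      rw [conjB ε δ β hε hcase hδ0 hδ1, hTdef, div_le_div_iff₀ hDε hDβ]
      nlinarith [mul_nonneg (mul_nonneg (sub_nonneg.2 hEB)
        (by nlinarith : (0:ℝ) ≤ c₂ - c₁)) (by linarith : (0:ℝ) ≤ 1 - δ),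
        mul_nonneg (sub_nonneg.2 hEB) (by linarith : (0:ℝ) ≤ 1 - δ)]
  exact le_antisymm (csInf_le ⟨T, hlb⟩ hTmem) (le_csInf ⟨T, hTmem⟩ hlb)
end
end

section
/- Let μ be a probability measure on a measurable space X, let 0 ≤ c₁ < 1 < c₂, ε ≥ 0, and 0 ≤ δ ≤ (c₂ − c₁e^ε)(1−c₁)/(c₂−c₁). Define λ* := (e^ε + ((c₂−c₁)/(1−c₁))·δ − 1)/((1−c₁)e^ε + c₂ − 1). Then 0 ≤ λ* ≤ 1, and the sampler Q*(P) := λ*·P + (1−λ*)·μ satisfies (ε,δ)-LDP on 𝒫_{c₁,c₂,μ}: for all P, P′ ∈ 𝒫_{c₁,c₂,μ} and every measurable set A ⊆ X, λ*·P(A) + (1−λ*)·μ(A) ≤ e^ε·(λ*·P′(A) + (1−λ*)·μ(A)) + δ. -/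
open MeasureTheory Set Filter
open scoped ENNReal

noncomputable section

/-- Integrand `q·f(p/q)` for `f`-divergences, with the standard conventions
`f(0) := lim_{t→0+} f(t)`, `0·f(0/0) := 0`, `0·f(a/0) := a·lim_{u→∞} f(u)/u`. -/
def fDivFun (f : ℝ → ℝ) (p q : ℝ) : ℝ :=
  if q = 0 then
    if p = 0 then 0 else p * limUnder Filter.atTop (fun u => f u / u)
  else if p = 0 then q * limUnder (nhdsWithin 0 (Set.Ioi 0)) f
  else q * f (p / q)

/-- `f`-divergence `D_f(P‖Q)`, with densities taken w.r.t. the common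
dominating measure `P + Q`. -/
def fDiv {X : Type*} [MeasurableSpace X] (f : ℝ → ℝ) (P Q : Measure X) : ℝ :=
  ∫ x, fDivFun f ((P.rnDeriv (P + Q) x).toReal) ((Q.rnDeriv (P + Q) x).toReal) ∂(P + Q)

/-- Trade-off function `T(P,Q)(u)`. -/
def tradeOff {X : Type*} [MeasurableSpace X] (P Q : Measure X) (u : ℝ) : ℝ :=
  sInf {b : ℝ | ∃ φ : X → ℝ, Measurable φ ∧ (∀ x, 0 ≤ φ x ∧ φ x ≤ 1) ∧
    (∫ x, φ x ∂P) ≤ u ∧ b = 1 - ∫ x, φ x ∂Q}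

/-- `g : [0,1] → [0,1]` is a trade-off function: convex, continuous,
non-increasing, nonnegative, and `g x ≤ 1 - x` on `[0,1]`. -/
def IsTradeOffFn (g : ℝ → ℝ) : Prop :=
  ConvexOn ℝ (Set.Icc 0 1) g ∧ ContinuousOn g (Set.Icc 0 1) ∧
  AntitoneOn g (Set.Icc 0 1) ∧ ∀ x ∈ Set.Icc (0:ℝ) 1, 0 ≤ g x ∧ g x ≤ 1 - x

/-- Convex conjugate of `g` over `[0,1]`: `g*(y) = sup_{x∈[0,1]} (x·y − g x)`. -/
def gConj (g : ℝ → ℝ) (y : ℝ) : ℝ :=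
  sSup ((fun x => x * y - g x) '' Set.Icc 0 1)

/-- The sampler `Q` satisfies `g`-FLDP on the class `S`. -/
def IsFLDPSampler {X : Type*} [MeasurableSpace X] (g : ℝ → ℝ) (S : Set (Measure X))
    (Q : Measure X → Measure X) : Prop :=
  (∀ P ∈ S, IsProbabilityMeasure (Q P)) ∧
  ∀ P ∈ S, ∀ P' ∈ S, ∀ u ∈ Set.Icc (0:ℝ) 1, g u ≤ tradeOff (Q P) (Q P') u

/-- The sampler `Q` satisfies `(ε,δ)`-LDP on the class `S`. -/
def IsLDPSampler {X : Type*} [MeasurableSpace X] (ε δ : ℝ) (S : Set (Measure X))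
    (Q : Measure X → Measure X) : Prop :=
  (∀ P ∈ S, IsProbabilityMeasure (Q P)) ∧
  ∀ P ∈ S, ∀ P' ∈ S, ∀ A : Set X, MeasurableSet A →
    ((Q P) A).toReal ≤ Real.exp ε * ((Q P') A).toReal + δ

/-- Mixture `l·P + (1−l)·Q` of two measures. -/
def mix {X : Type*} [MeasurableSpace X] (l : ℝ) (P Q : Measure X) : Measure X :=
  ENNReal.ofReal l • P + ENNReal.ofReal (1 - l) • Q

/-- The class `𝒫_{c₁,c₂,μ}` of probability measures `P ≪ μ` with
`c₁ ≤ dP/dμ ≤ c₂` μ-a.e. -/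
def PClassMu {X : Type*} [MeasurableSpace X] (μ : Measure X) (c₁ c₂ : ℝ) :
    Set (Measure X) :=
  {P | IsProbabilityMeasure P ∧ P ≪ μ ∧
    ∀ᵐ x ∂μ, c₁ ≤ (P.rnDeriv μ x).toReal ∧ (P.rnDeriv μ x).toReal ≤ c₂}

/-- The class `𝒫_{c₁,c₂,h}` of absolutely continuous probability measures on `ℝⁿ`
whose density `p` satisfies `c₁·h ≤ p ≤ c₂·h` pointwise. -/
def PClassH (n : ℕ) (h : (Fin n → ℝ) → ℝ) (c₁ c₂ : ℝ) : Set (Measure (Fin n → ℝ)) :=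
  {P | IsProbabilityMeasure P ∧ ∃ p : (Fin n → ℝ) → ℝ, Measurable p ∧
    (∀ x, c₁ * h x ≤ p x ∧ p x ≤ c₂ * h x) ∧
    P = volume.withDensity (fun x => ENNReal.ofReal (p x))}


private lemma key_arith (c₁ c₂ e δ lam p p' pc m m' : ℝ)
    (hc₁0 : 0 ≤ c₁) (hc₁ : c₁ < 1) (hc₂ : 1 < c₂) (he : 1 ≤ e) (hδ0 : 0 ≤ δ)
    (hlam0 : 0 ≤ lam) (hlam1 : lam ≤ 1)
    (hlamD : lam * ((1 - c₁) * e + c₂ - 1) = e - 1 + (c₂ - c₁) / (1 - c₁) * δ)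
    (hm : 0 ≤ m) (hm' : 0 ≤ m') (hmm : m + m' = 1)
    (hp2 : p ≤ c₂ * m) (hp1' : c₁ * m ≤ p')
    (hpsum : p + pc = 1) (hpc : c₁ * m' ≤ pc) :
    lam * p + (1 - lam) * m ≤ e * (lam * p' + (1 - lam) * m) + δ := by
  have h1c : (0:ℝ) < 1 - c₁ := by linarith
  set r := (c₂ - c₁) / (1 - c₁) with hr
  have hrδ : r * δ * (1 - c₁) = (c₂ - c₁) * δ := by
    field_simp [hr]
    rw [hr, div_mul_eq_mul_div, div_mul_cancel₀ _ h1c.ne']; ring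
  have hr0 : 0 ≤ r * δ := by
    apply mul_nonneg (div_nonneg (by linarith) h1c.le) hδ0
  rcases le_or_gt (m * (c₂ - c₁)) (1 - c₁) with hcase | hcase
  · nlinarith [mul_le_mul_of_nonneg_left hp2 hlam0,
      mul_le_mul_of_nonneg_left hp1' (by positivity : (0:ℝ) ≤ e * lam),
      mul_le_mul_of_nonneg_left hcase hr0, mul_nonneg hm hδ0,
      mul_nonneg (mul_nonneg hm hδ0) hc₁0]
  · have hp : p ≤ 1 - c₁ * m' := by linarith
    have ha : 0 ≤ lam * c₁ + (1 - lam) := by nlinarith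
    have hea : 0 ≤ (e - 1) * (lam * c₁ + (1 - lam)) := mul_nonneg (by linarith) ha
    have h2 : (e - 1) * (lam * c₁ + (1 - lam)) * (1 - c₁) ≤
        (e - 1) * (lam * c₁ + (1 - lam)) * (m * (c₂ - c₁)) :=
      mul_le_mul_of_nonneg_left hcase.le hea
    have hlamD2 : lam * ((1 - c₁) * e + c₂ - 1) * (1 - c₁) = (e - 1 + r * δ) * (1 - c₁) := by
      rw [hlamD]
    have hstep : lam * (1 - c₁) - (e - 1) * (lam * c₁ + (1 - lam)) * m ≤ δ := by
      rw [← mul_le_mul_iff_of_pos_right (show (0:ℝ) < c₂ - c₁ by linarith)]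
      nlinarith [h2, hrδ, hlamD2]
    nlinarith [mul_le_mul_of_nonneg_left hp hlam0,
      mul_le_mul_of_nonneg_left hp1' (by positivity : (0:ℝ) ≤ e * lam), hstep]

private lemma meas_bounds {X : Type*} [MeasurableSpace X] (μ : Measure X)
    [IsProbabilityMeasure μ]
    {P : Measure X} (hP : IsProbabilityMeasure P) (hac : P ≪ μ) {c₁ c₂ : ℝ}
    (hc₁0 : 0 ≤ c₁) (hc₂0 : 0 ≤ c₂)
    (hbd : ∀ᵐ x ∂μ, c₁ ≤ (P.rnDeriv μ x).toReal ∧ (P.rnDeriv μ x).toReal ≤ c₂)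
    (B : Set X) (hB : MeasurableSet B) :
    c₁ * (μ B).toReal ≤ (P B).toReal ∧ (P B).toReal ≤ c₂ * (μ B).toReal := by
  have hPB : P B = ∫⁻ x in B, P.rnDeriv μ x ∂μ := (Measure.setLIntegral_rnDeriv hac B).symm
  have hae : ∀ᵐ x ∂μ, ENNReal.ofReal c₁ ≤ P.rnDeriv μ x ∧
      P.rnDeriv μ x ≤ ENNReal.ofReal c₂ := by
    filter_upwards [hbd, Measure.rnDeriv_lt_top P μ] with x hx hlt
    have hne : P.rnDeriv μ x ≠ ⊤ := hlt.ne
    constructor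
    · rw [← ENNReal.ofReal_toReal hne]
      exact ENNReal.ofReal_le_ofReal hx.1
    · rw [← ENNReal.ofReal_toReal hne]
      exact ENNReal.ofReal_le_ofReal hx.2
  have hup : P B ≤ ENNReal.ofReal c₂ * μ B := by
    rw [hPB]
    calc ∫⁻ x in B, P.rnDeriv μ x ∂μ ≤ ∫⁻ _ in B, ENNReal.ofReal c₂ ∂μ :=
          lintegral_mono_ae (ae_restrict_of_ae (hae.mono fun x hx => hx.2))
      _ = ENNReal.ofReal c₂ * μ B := by rw [setLIntegral_const, mul_comm]
  have hlo : ENNReal.ofReal c₁ * μ B ≤ P B := by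
    rw [hPB]
    calc ENNReal.ofReal c₁ * μ B = ∫⁻ _ in B, ENNReal.ofReal c₁ ∂μ := by
          rw [setLIntegral_const, mul_comm]
      _ ≤ ∫⁻ x in B, P.rnDeriv μ x ∂μ :=
          lintegral_mono_ae (ae_restrict_of_ae (hae.mono fun x hx => hx.1))
  have hPfin : P B ≠ ⊤ := (measure_lt_top P B).ne
  constructor
  · have := ENNReal.toReal_mono hPfin hlo
    rwa [ENNReal.toReal_mul, ENNReal.toReal_ofReal hc₁0] at this
  · have := ENNReal.toReal_mono (by finiteness) hup
    rwa [ENNReal.toReal_mul, ENNReal.toReal_ofReal hc₂0] at this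


/-- The optimal mixture weight lies in `[0,1]` and the mixture sampler is
(ε,δ)-LDP on `𝒫_{c₁,c₂,μ}`. -/
theorem stmt_14 {X : Type*} [MeasurableSpace X] (μ : Measure X) [IsProbabilityMeasure μ]
    (c₁ c₂ ε δ : ℝ) (hc₁0 : 0 ≤ c₁) (hc₁ : c₁ < 1) (hc₂ : 1 < c₂) (hε : 0 ≤ ε)
    (hδ0 : 0 ≤ δ) (hδ : δ ≤ (c₂ - c₁ * Real.exp ε) * (1 - c₁) / (c₂ - c₁)) :
    let lam := (Real.exp ε + (c₂ - c₁) / (1 - c₁) * δ - 1) /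
      ((1 - c₁) * Real.exp ε + c₂ - 1)
    0 ≤ lam ∧ lam ≤ 1 ∧
    ∀ P ∈ PClassMu μ c₁ c₂, ∀ P' ∈ PClassMu μ c₁ c₂, ∀ A : Set X, MeasurableSet A →
      lam * (P A).toReal + (1 - lam) * (μ A).toReal ≤
        Real.exp ε * (lam * (P' A).toReal + (1 - lam) * (μ A).toReal) + δ := by
  have he : 1 ≤ Real.exp ε := Real.one_le_exp hε
  have h1c : (0:ℝ) < 1 - c₁ := by linarith
  have hc21 : (0:ℝ) < c₂ - c₁ := by linarith
  have hD : (0:ℝ) < (1 - c₁) * Real.exp ε + c₂ - 1 := by nlinarith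
  have hrδ0 : 0 ≤ (c₂ - c₁) / (1 - c₁) * δ := mul_nonneg (div_nonneg hc21.le h1c.le) hδ0
  have hrδle : (c₂ - c₁) / (1 - c₁) * δ ≤ c₂ - c₁ * Real.exp ε := by
    rw [div_mul_eq_mul_div, div_le_iff₀ h1c]
    have h := (le_div_iff₀ hc21).mp hδ
    nlinarith
  intro lam
  have hdef : lam = (Real.exp ε + (c₂ - c₁) / (1 - c₁) * δ - 1) /
      ((1 - c₁) * Real.exp ε + c₂ - 1) := rfl
  have hlam0 : 0 ≤ lam := by
    rw [hdef]; exact div_nonneg (by linarith) hD.le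
  have hlam1 : lam ≤ 1 := by
    rw [hdef]; rw [div_le_one hD]; nlinarith
  have hlamD : lam * ((1 - c₁) * Real.exp ε + c₂ - 1) =
      Real.exp ε - 1 + (c₂ - c₁) / (1 - c₁) * δ := by
    rw [hdef, div_mul_cancel₀ _ hD.ne']; ring
  refine ⟨hlam0, hlam1, ?_⟩
  rintro P ⟨hPprob, hPac, hPbd⟩ P' ⟨hP'prob, hP'ac, hP'bd⟩ A hA
  have hc₂0 : (0:ℝ) ≤ c₂ := by linarith
  obtain ⟨-, hPup⟩ := meas_bounds μ hPprob hPac hc₁0 hc₂0 hPbd A hA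
  obtain ⟨hPclo, -⟩ := meas_bounds μ hPprob hPac hc₁0 hc₂0 hPbd Aᶜ hA.compl
  obtain ⟨hP'lo, -⟩ := meas_bounds μ hP'prob hP'ac hc₁0 hc₂0 hP'bd A hA
  have hmm : (μ A).toReal + (μ Aᶜ).toReal = 1 := by
    rw [← ENNReal.toReal_add (measure_ne_top μ A) (measure_ne_top μ Aᶜ),
      measure_add_measure_compl hA, measure_univ, ENNReal.toReal_one]
  have hpsum : (P A).toReal + (P Aᶜ).toReal = 1 := by
    haveI := hPprob
    rw [← ENNReal.toReal_add (measure_ne_top P A) (measure_ne_top P Aᶜ),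
      measure_add_measure_compl hA, measure_univ, ENNReal.toReal_one]
  exact key_arith c₁ c₂ (Real.exp ε) δ lam (P A).toReal (P' A).toReal (P Aᶜ).toReal
    (μ A).toReal (μ Aᶜ).toReal hc₁0 hc₁ hc₂ he hδ0 hlam0 hlam1 hlamD
    ENNReal.toReal_nonneg ENNReal.toReal_nonneg hmm hPup hP'lo hpsum hPclo
end
end

section
/- Let t ∈ ℕ with t ≥ 2, let ε ≥ 0 and δ ≥ 0, let A₁,…,A_t be pairwise disjoint measurable subsets of a measurable space X, and let Q₁,…,Q_t be probability measures on X such that Q_i(A_i) ≤ e^ε·Q₁(A_i) + δ for every i ∈ {2,…,t}. Then min_{1 ≤ i ≤ t} Q_i(A_i) ≤ (e^ε + (t−1)δ)/(e^ε + t − 1). -/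
open MeasureTheory Set Filter
open scoped ENNReal

noncomputable section

/-- Converse lemma: disjoint sets and (ε,δ)-type inequalities force a small
minimum mass `min_i Q_i(A_i)`. Index `⟨0, _⟩` plays the role of `Q₁`. -/
theorem stmt_15 {X : Type*} [MeasurableSpace X] (t : ℕ) (ht : 2 ≤ t)
    (ε δ : ℝ) (hε : 0 ≤ ε) (hδ : 0 ≤ δ)
    (A : Fin t → Set X) (hA : ∀ i, MeasurableSet (A i))
    (hdis : Pairwise (Function.onFun Disjoint A))
    (Q : Fin t → Measure X) (hQ : ∀ i, IsProbabilityMeasure (Q i))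
    (h : ∀ i : Fin t, i ≠ ⟨0, by omega⟩ →
      ((Q i) (A i)).toReal ≤ Real.exp ε * ((Q (⟨0, by omega⟩ : Fin t)) (A i)).toReal + δ) :
    (⨅ i, ((Q i) (A i)).toReal) ≤
      (Real.exp ε + ((t : ℝ) - 1) * δ) / (Real.exp ε + (t : ℝ) - 1) := by
  have hE : (0:ℝ) < Real.exp ε := Real.exp_pos ε
  have hE1 : (1:ℝ) ≤ Real.exp ε := Real.one_le_exp hε
  have htR : (2:ℝ) ≤ (t:ℝ) := by exact_mod_cast ht
  set E := Real.exp ε with hEdef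
  set i0 : Fin t := ⟨0, by omega⟩ with hi0
  set m := ⨅ i, ((Q i) (A i)).toReal with hm
  have hbdd : BddBelow (Set.range fun i => ((Q i) (A i)).toReal) :=
    ⟨0, by rintro x ⟨i, rfl⟩; exact ENNReal.toReal_nonneg⟩
  have hmle : ∀ i, m ≤ ((Q i) (A i)).toReal := fun i => ciInf_le hbdd i
  haveI := hQ i0
  have hne : ∀ i, Q i0 (A i) ≠ ⊤ := fun i => measure_ne_top _ _
  have hsum : ∑ i, ((Q i0) (A i)).toReal ≤ 1 := by
    have h1 : (Q i0) (⋃ i, A i) = ∑' i, Q i0 (A i) := measure_iUnion hdis hA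
    have h2 : ∑' i, Q i0 (A i) = ∑ i, Q i0 (A i) := tsum_fintype _
    have h3 : ∑ i, Q i0 (A i) ≤ 1 := by rw [← h2, ← h1]; exact prob_le_one
    calc ∑ i, ((Q i0) (A i)).toReal = (∑ i, Q i0 (A i)).toReal :=
          (ENNReal.toReal_sum (fun i _ => hne i)).symm
    _ ≤ (1:ℝ≥0∞).toReal := ENNReal.toReal_mono ENNReal.one_ne_top h3
    _ = 1 := by simp
  have hlow : ∀ i, (if i = i0 then m else (m - δ)/E) ≤ ((Q i0) (A i)).toReal := by
    intro i
    by_cases hi : i = i0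
    · simp only [if_pos hi, hi]; exact hmle i0
    · simp only [hi, if_false]
      have h4 := (hmle i).trans (h i hi)
      rw [div_le_iff₀ hE]
      nlinarith [h4]
  have hsumlow : m + ((t:ℝ) - 1) * ((m - δ)/E) ≤ ∑ i, ((Q i0) (A i)).toReal := by
    have hs := Finset.sum_le_sum (fun i (_ : i ∈ Finset.univ) => hlow i)
    have hcard : ((Finset.univ.erase i0).card : ℝ) = (t:ℝ) - 1 := by
      rw [Finset.card_erase_of_mem (Finset.mem_univ _)]
      simp [Fintype.card_fin]
      have : 1 ≤ t := by omega
      push_cast [Nat.cast_sub this]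
      ring
    have heq : ∑ i, (if i = i0 then m else (m - δ)/E)
        = m + ((t:ℝ) - 1) * ((m - δ)/E) := by
      rw [← Finset.add_sum_erase Finset.univ _ (Finset.mem_univ i0)]
      simp only [if_pos rfl]
      congr 1
      rw [Finset.sum_congr rfl (fun i hi => if_neg (Finset.ne_of_mem_erase hi)),
        Finset.sum_const, nsmul_eq_mul, hcard]
    linarith [heq ▸ hs]
  have key : m + ((t:ℝ) - 1) * ((m - δ)/E) ≤ 1 := hsumlow.trans hsum
  have hden : (0:ℝ) < E + (t:ℝ) - 1 := by linarith
  rw [le_div_iff₀ hden]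
  have key2 : m * E + ((t:ℝ) - 1) * (m - δ) ≤ E := by
    have := mul_le_mul_of_nonneg_right key hE.le
    calc m * E + ((t:ℝ) - 1) * (m - δ)
        = (m + ((t:ℝ) - 1) * ((m - δ)/E)) * E := by field_simp
    _ ≤ 1 * E := this
    _ = E := one_mul E
  nlinarith [key2]
end
end

section
/- Let 0 ≤ c₁ < 1 < c₂ with c₁ + c₂ ≥ 2, let ε ≥ 0 and 0 ≤ δ ≤ 1. Then (e^ε + ((c₂−c₁)/(1−c₁))·δ − 1)/((1−c₁)e^ε + c₂ − 1) ≤ (1 − (1−δ)·2/(e^ε + 1))/(1−c₁). -/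
/-- Elementary inequality comparing the two candidate mixture weights when
`c₁ + c₂ ≥ 2`. -/
theorem stmt_16 (c₁ c₂ ε δ : ℝ) (hc₁0 : 0 ≤ c₁) (hc₁ : c₁ < 1) (hc₂ : 1 < c₂)
    (hsum : 2 ≤ c₁ + c₂) (hε : 0 ≤ ε) (hδ0 : 0 ≤ δ) (hδ1 : δ ≤ 1) :
    (Real.exp ε + (c₂ - c₁) / (1 - c₁) * δ - 1) / ((1 - c₁) * Real.exp ε + c₂ - 1) ≤
      (1 - (1 - δ) * 2 / (Real.exp ε + 1)) / (1 - c₁) := by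
  have hE : 1 ≤ Real.exp ε := Real.one_le_exp hε
  set E := Real.exp ε with hEdef
  have ha : (0:ℝ) < 1 - c₁ := by linarith
  have hD : (0:ℝ) < (1 - c₁) * E + c₂ - 1 := by nlinarith
  have hE1 : (0:ℝ) < E + 1 := by linarith
  rw [div_le_div_iff₀ hD ha]
  have hr : 1 - (1 - δ) * 2 / (E + 1) = (E - 1 + 2 * δ) / (E + 1) := by
    field_simp; ring
  rw [hr, div_mul_eq_mul_div (E - 1 + 2 * δ) (E + 1) ((1 - c₁) * E + c₂ - 1),
    le_div_iff₀ hE1]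
  have hk : (E + (c₂ - c₁) / (1 - c₁) * δ - 1) * (1 - c₁) * (E + 1) =
      (E - 1) * (1 - c₁) * (E + 1) + (c₂ - c₁) * δ * (E + 1) := by
    field_simp
    ring
  rw [hk]
  nlinarith [mul_nonneg (mul_nonneg (sub_nonneg.mpr hE) (sub_nonneg.mpr hδ1))
      (by linarith : (0:ℝ) ≤ c₂ - 1 - (1 - c₁)),
    mul_nonneg hδ0 (sub_nonneg.mpr hE)]
end

section
/- Fix ε ≥ 0 and δ ∈ [0,1], and define g_{ε,δ} : [0,1] → ℝ by g_{ε,δ}(θ) := max{0, 1−δ−e^ε·θ, e^{−ε}(1−δ−θ)}. Then the convex conjugate g*_{ε,δ}(y) := sup_{θ∈[0,1]}(θ·y − g_{ε,δ}(θ)) satisfies: g*_{ε,δ}(y) = −(1−δ) if y < −e^ε; g*_{ε,δ}(y) = (1−δ)(y−1)/(e^ε+1) if −e^ε ≤ y ≤ −e^{−ε}; g*_{ε,δ}(y) = (1−δ)·y if −e^{−ε} ≤ y ≤ 0; and g*_{ε,δ}(y) = y if y ≥ 0. -/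
open Set

noncomputable section

private lemma aux_sup (a b c y : ℝ) (ha : 1 ≤ a) (hb0 : 0 < b) (hb1 : b ≤ 1)
    (hab : a * b = 1) (hc0 : 0 ≤ c) (hc1 : c ≤ 1) (θ0 v : ℝ)
    (hθ0 : θ0 ∈ Icc (0:ℝ) 1)
    (heq : θ0 * y - max 0 (max (c - a * θ0) (b * (c - θ0))) = v)
    (hub : ∀ θ ∈ Icc (0:ℝ) 1, θ * y - max 0 (max (c - a * θ) (b * (c - θ))) ≤ v) :
    sSup ((fun θ => θ * y - max 0 (max (c - a * θ) (b * (c - θ)))) '' Icc 0 1) = v := by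
  apply IsGreatest.csSup_eq
  constructor
  · exact ⟨θ0, hθ0, heq⟩
  · rintro x ⟨θ, hθ, rfl⟩
    exact hub θ hθ

/-- Piecewise closed form of the convex conjugate of `g_{ε,δ}`. -/
theorem stmt_17 (ε δ : ℝ) (hε : 0 ≤ ε) (hδ : δ ∈ Set.Icc (0:ℝ) 1) :
    (∀ y : ℝ, y < -Real.exp ε → gConj01 (gEpsDelta ε δ) y = -(1 - δ)) ∧
    (∀ y : ℝ, -Real.exp ε ≤ y → y ≤ -Real.exp (-ε) →
      gConj01 (gEpsDelta ε δ) y = (1 - δ) * (y - 1) / (Real.exp ε + 1)) ∧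
    (∀ y : ℝ, -Real.exp (-ε) ≤ y → y ≤ 0 →
      gConj01 (gEpsDelta ε δ) y = (1 - δ) * y) ∧
    (∀ y : ℝ, 0 ≤ y → gConj01 (gEpsDelta ε δ) y = y) := by
  obtain ⟨hδ0, hδ1⟩ := hδ
  have ha : (1:ℝ) ≤ Real.exp ε := Real.one_le_exp hε
  have hb0 : (0:ℝ) < Real.exp (-ε) := Real.exp_pos _
  have hb1 : Real.exp (-ε) ≤ 1 := Real.exp_le_one_iff.mpr (by linarith)
  have hab : Real.exp ε * Real.exp (-ε) = 1 := by rw [← Real.exp_add]; simp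
  set a := Real.exp ε
  set b := Real.exp (-ε)
  have hc0 : 0 ≤ 1 - δ := by linarith
  have hc1 : 1 - δ ≤ 1 := by linarith
  set c := 1 - δ with hc
  have key : ∀ y, gConj01 (gEpsDelta ε δ) y
      = sSup ((fun θ => θ * y - max 0 (max (c - a * θ) (b * (c - θ)))) '' Icc 0 1) := by
    intro y; rfl
  refine ⟨?_, ?_, ?_, ?_⟩
  · -- y < -a : value -c, maximizer 0
    intro y hy
    rw [key]
    apply aux_sup a b c y ha hb0 hb1 hab hc0 hc1 0 (-c) (by constructor <;> norm_num)
    · have h1 : max (c - a * 0) (b * (c - 0)) = c := by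
        rw [max_eq_left (by nlinarith)]; ring
      rw [h1, max_eq_right hc0]; ring
    · rintro θ ⟨h0, h1⟩
      have hg : c - a * θ ≤ max 0 (max (c - a * θ) (b * (c - θ))) :=
        le_trans (le_max_left _ _) (le_max_right _ _)
      nlinarith [mul_nonneg h0 (by linarith : (0:ℝ) ≤ -(y + a))]
  · -- -a ≤ y ≤ -b : value c(y-1)/(a+1), maximizer c/(a+1)
    intro y hy1 hy2
    rw [key]
    have hap : (0:ℝ) < a + 1 := by linarith
    apply aux_sup a b c y ha hb0 hb1 hab hc0 hc1 (c / (a + 1)) _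
      ⟨by positivity, by rw [div_le_one hap]; linarith⟩
    · have e1 : c - a * (c / (a + 1)) = c / (a + 1) := by field_simp; ring
      have e2 : b * (c - c / (a + 1)) = c / (a + 1) := by
        field_simp; nlinarith
      rw [e1, e2, max_self, max_eq_right (by positivity)]
      field_simp
    · rintro θ ⟨h0, h1⟩
      rw [le_div_iff₀ hap]
      rcases le_total θ (c / (a + 1)) with h | h
      · have hg : c - a * θ ≤ max 0 (max (c - a * θ) (b * (c - θ))) :=
          le_trans (le_max_left _ _) (le_max_right _ _)
        have h' : θ * (a + 1) ≤ c := by rw [← le_div_iff₀ hap]; exact h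
        nlinarith [mul_nonneg (by linarith : (0:ℝ) ≤ y + a) (by linarith : (0:ℝ) ≤ c - θ * (a + 1))]
      · have hg : b * (c - θ) ≤ max 0 (max (c - a * θ) (b * (c - θ))) :=
          le_trans (le_max_right _ _) (le_max_right _ _)
        have h' : c ≤ θ * (a + 1) := by rw [← div_le_iff₀ hap] at *; exact h
        nlinarith [mul_nonneg (by linarith : (0:ℝ) ≤ -(y + b)) (by linarith : (0:ℝ) ≤ θ * (a + 1) - c)]
  · -- -b ≤ y ≤ 0 : value c*y, maximizer c
    intro y hy1 hy2
    rw [key]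
    apply aux_sup a b c y ha hb0 hb1 hab hc0 hc1 c (c * y) ⟨hc0, hc1⟩
    · have : max (c - a * c) (b * (c - c)) ≤ 0 := by
        apply max_le <;> nlinarith
      rw [max_eq_left this]; ring
    · rintro θ ⟨h0, h1⟩
      rcases le_total θ c with h | h
      · have hg : b * (c - θ) ≤ max 0 (max (c - a * θ) (b * (c - θ))) :=
          le_trans (le_max_right _ _) (le_max_right _ _)
        nlinarith [mul_nonneg (by linarith : (0:ℝ) ≤ y + b) (by linarith : (0:ℝ) ≤ c - θ)]
      · have hg : (0:ℝ) ≤ max 0 (max (c - a * θ) (b * (c - θ))) := le_max_left _ _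
        nlinarith [mul_nonneg (by linarith : (0:ℝ) ≤ -y) (by linarith : (0:ℝ) ≤ θ - c)]
  · -- 0 ≤ y : value y, maximizer 1
    intro y hy
    rw [key]
    apply aux_sup a b c y ha hb0 hb1 hab hc0 hc1 1 y (by constructor <;> norm_num)
    · have : max (c - a * 1) (b * (c - 1)) ≤ 0 := by
        apply max_le <;> nlinarith
      rw [max_eq_left this]; ring
    · rintro θ ⟨h0, h1⟩
      have hg : (0:ℝ) ≤ max 0 (max (c - a * θ) (b * (c - θ))) := le_max_left _ _
      nlinarith [mul_nonneg hy (by linarith : (0:ℝ) ≤ 1 - θ)]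
end
end

section
/- Let P₀ be a probability measure on a measurable space X, let γ ∈ ℕ with γ ≥ 2, and let 0 ≤ ε ≤ 2·log(γ). Set λ* := γ(e^ε − 1)/((γ−1)(e^ε + γ)). If P ∈ N_γ(P₀), then the measure Q := λ*·P + (1−λ*)·P₀ satisfies Q ≪ P₀ and (γ+1)/(e^ε + γ) ≤ dQ/dP₀ ≤ (γ+1)·e^ε/(e^ε + γ) P₀-almost everywhere. -/
open MeasureTheory Set Filter
open scoped ENNReal

noncomputable section

/-- The linear sampler's output lies in the mollifier: `Q ≪ P₀` with density
between `(γ+1)/(e^ε+γ)` and `(γ+1)e^ε/(e^ε+γ)`. -/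
theorem stmt_18 {X : Type*} [MeasurableSpace X] (P₀ : Measure X) [IsProbabilityMeasure P₀]
    (γ : ℕ) (hγ : 2 ≤ γ) (ε : ℝ) (hε0 : 0 ≤ ε) (hε : ε ≤ 2 * Real.log (γ : ℝ))
    (P : Measure X) (hP : P ∈ PClassMu P₀ (1 / (γ : ℝ)) (γ : ℝ)) :
    let lam := (γ : ℝ) * (Real.exp ε - 1) / (((γ : ℝ) - 1) * (Real.exp ε + (γ : ℝ)))
    let Q := mix lam P P₀
    Q ≪ P₀ ∧
    ∀ᵐ x ∂P₀,
      ((γ : ℝ) + 1) / (Real.exp ε + (γ : ℝ)) ≤ (Q.rnDeriv P₀ x).toReal ∧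
      (Q.rnDeriv P₀ x).toReal ≤ ((γ : ℝ) + 1) * Real.exp ε / (Real.exp ε + (γ : ℝ)) := by
  intro lam Q
  obtain ⟨hPprob, hPac, hPd⟩ := hP
  have hγR : (2:ℝ) ≤ (γ:ℝ) := by exact_mod_cast hγ
  have hγpos : (0:ℝ) < (γ:ℝ) := by linarith
  set E := Real.exp ε with hE
  have hE1 : 1 ≤ E := by simpa using Real.exp_le_exp.mpr hε0 |>.trans_eq' (by simp)
  have hEle : E ≤ (γ:ℝ) * (γ:ℝ) := by
    have : E ≤ Real.exp (2 * Real.log (γ:ℝ)) := Real.exp_le_exp.mpr hε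
    calc E ≤ Real.exp (2 * Real.log (γ:ℝ)) := this
    _ = Real.exp (Real.log (γ:ℝ)) * Real.exp (Real.log (γ:ℝ)) := by
        rw [← Real.exp_add]; ring_nf
    _ = (γ:ℝ) * (γ:ℝ) := by rw [Real.exp_log hγpos]
  have hden : (0:ℝ) < ((γ:ℝ) - 1) * (E + (γ:ℝ)) := by nlinarith
  have hlam0 : 0 ≤ lam := by
    apply div_nonneg _ hden.le
    nlinarith
  have hlam1 : lam ≤ 1 := by
    rw [div_le_one hden]
    nlinarith
  have hEγ : (0:ℝ) < E + (γ:ℝ) := by linarith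
  -- key algebraic identities
  have hupper : lam * (γ:ℝ) + (1 - lam) = ((γ:ℝ) + 1) * E / (E + (γ:ℝ)) := by
    show (γ:ℝ) * (E - 1) / (((γ:ℝ) - 1) * (E + (γ:ℝ))) * (γ:ℝ)
        + (1 - (γ:ℝ) * (E - 1) / (((γ:ℝ) - 1) * (E + (γ:ℝ)))) = _
    have hγ1 : (γ:ℝ) - 1 ≠ 0 := by linarith
    field_simp
    ring
  have hlower : lam * (1 / (γ:ℝ)) + (1 - lam) = ((γ:ℝ) + 1) / (E + (γ:ℝ)) := by
    show (γ:ℝ) * (E - 1) / (((γ:ℝ) - 1) * (E + (γ:ℝ))) * (1 / (γ:ℝ))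
        + (1 - (γ:ℝ) * (E - 1) / (((γ:ℝ) - 1) * (E + (γ:ℝ)))) = _
    have hγ1 : (γ:ℝ) - 1 ≠ 0 := by linarith
    field_simp
    ring
  -- finiteness / sigma-finiteness
  have hfin1 : IsFiniteMeasure (ENNReal.ofReal lam • P) := by
    constructor
    simp only [Measure.smul_apply, smul_eq_mul]
    exact ENNReal.mul_lt_top ENNReal.ofReal_lt_top (measure_lt_top P _)
  have hfin2 : IsFiniteMeasure (ENNReal.ofReal (1 - lam) • P₀) := by
    constructor
    simp only [Measure.smul_apply, smul_eq_mul]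
    exact ENNReal.mul_lt_top ENNReal.ofReal_lt_top (measure_lt_top P₀ _)
  have hQac : Q ≪ P₀ :=
    Measure.AbsolutelyContinuous.add_left_iff.mpr
      ⟨hPac.smul_left _, Measure.AbsolutelyContinuous.rfl.smul_left _⟩
  refine ⟨hQac, ?_⟩
  -- compute the density
  have h1 : (ENNReal.ofReal lam • P).rnDeriv P₀ =ᵐ[P₀] ENNReal.ofReal lam • P.rnDeriv P₀ :=
    Measure.rnDeriv_smul_left_of_ne_top' P P₀ ENNReal.ofReal_ne_top
  have h2 : (ENNReal.ofReal (1 - lam) • P₀).rnDeriv P₀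
      =ᵐ[P₀] ENNReal.ofReal (1 - lam) • P₀.rnDeriv P₀ :=
    Measure.rnDeriv_smul_left_of_ne_top' P₀ P₀ ENNReal.ofReal_ne_top
  have hadd : Q.rnDeriv P₀ =ᵐ[P₀]
      (ENNReal.ofReal lam • P).rnDeriv P₀ + (ENNReal.ofReal (1 - lam) • P₀).rnDeriv P₀ :=
    Measure.rnDeriv_add' _ _ _
  have hself : P₀.rnDeriv P₀ =ᵐ[P₀] fun _ => 1 := Measure.rnDeriv_self P₀
  have hPlt : ∀ᵐ x ∂P₀, P.rnDeriv P₀ x < ⊤ := Measure.rnDeriv_lt_top P P₀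
  filter_upwards [hadd, h1, h2, hself, hPlt, hPd] with x hx1 hx2 hx3 hx4 hx5 hx6
  have hrd : Q.rnDeriv P₀ x
      = ENNReal.ofReal lam * P.rnDeriv P₀ x + ENNReal.ofReal (1 - lam) := by
    rw [hx1, Pi.add_apply, hx2, hx3, Pi.smul_apply, Pi.smul_apply, hx4, smul_eq_mul,
      smul_eq_mul, mul_one]
  have hfin : ENNReal.ofReal lam * P.rnDeriv P₀ x ≠ ⊤ :=
    ENNReal.mul_ne_top ENNReal.ofReal_ne_top hx5.ne
  have htr : (Q.rnDeriv P₀ x).toReal = lam * (P.rnDeriv P₀ x).toReal + (1 - lam) := by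
    rw [hrd, ENNReal.toReal_add hfin ENNReal.ofReal_ne_top, ENNReal.toReal_mul,
      ENNReal.toReal_ofReal hlam0, ENNReal.toReal_ofReal (by linarith)]
  obtain ⟨hr1, hr2⟩ := hx6
  constructor
  · rw [htr, ← hlower]
    nlinarith
  · rw [htr, ← hupper]
    nlinarith
end
end
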